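/- Let σ > 0, δ ∈ ℝ, r ∈ ℝ, K > 0, set ρ = r − δ, and let U : (0,∞) → ℝ be twice continuously differentiable satisfying (1/2)σ²z²U''(z) + (1 − δz)U'(z) − ρU(z) = 0 for all z in an interval I ⊆ (0,∞). Define S'(z) = z^{2δ/σ²}e^{2/(σ²z)} and m'(z) = 2/(σ²z²S'(z)). Then for all z ∈ I, (d/dz)[(U(z) − (z−K)U'(z))/S'(z)] = (1 + ρK − rz)·U(z)·m'(z). -/

import Mathlib

/-!
With `S'(z) = z^p e^{q/z}`, `p = 2δ/σ²`, `q = 2/σ²`, the logarithmic derivative is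
`S''/S' = p/z - q/z² = m'S'·(δz - 1)`. The numerator `N = U - (z-K)U'` has `N' = -(z-K)U''`, and
eliminating `U''` with the ODE makes the `U'` terms of `N' - N·S''/S'` cancel, leaving
`m'S'·(1 - δz - ρ(z-K))·U = m'S'·(1 + ρK - rz)·U`.
-/

open Real

theorem hasDerivAt_rpow_mul_exp_div {z : ℝ} (hz : z ≠ 0) (p q : ℝ) :
    HasDerivAt (fun t : ℝ => t ^ p * exp (q / t))
      (z ^ p * exp (q / z) * (p / z - q / z ^ 2)) z := by
  have hpow : HasDerivAt (fun t : ℝ => t ^ p) (p * z ^ (p - 1)) z :=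
    hasDerivAt_rpow_const (Or.inl hz)
  have hexp : HasDerivAt (fun t : ℝ => exp (q / t)) (exp (q / z) * (q * -(z ^ 2)⁻¹)) z := by
    simpa only [div_eq_mul_inv] using ((hasDerivAt_inv hz).const_mul q).exp
  refine (hpow.mul hexp).congr_deriv ?_
  rw [rpow_sub_one hz]
  field_simp
  ring

theorem ContDiffOn.hasDerivAt_deriv_of_two {U : ℝ → ℝ} {s : Set ℝ} {z : ℝ}
    (hU : ContDiffOn ℝ 2 U s) (hs : IsOpen s) (hz : z ∈ s) :
    HasDerivAt U (deriv U z) z ∧ HasDerivAt (deriv U) (deriv (deriv U) z) z := by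
  have hmem : s ∈ nhds z := hs.mem_nhds hz
  have hU' : ContDiffOn ℝ 1 (deriv U) s := hU.deriv_of_isOpen hs (by norm_num)
  exact ⟨((hU.differentiableOn (by norm_num)).differentiableAt hmem).hasDerivAt,
    ((hU'.differentiableOn (by norm_num)).differentiableAt hmem).hasDerivAt⟩

theorem HasDerivAt.sub_sub_const_mul {f f' : ℝ → ℝ} {a z : ℝ} (K : ℝ)
    (hf : HasDerivAt f (f' z) z) (hf' : HasDerivAt f' a z) :
    HasDerivAt (fun t => f t - (t - K) * f' t) (-(z - K) * a) z := by
  refine (hf.sub (((hasDerivAt_id z).sub_const K).mul hf')).congr_deriv ?_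
  simp only [id_eq]
  ring

theorem stmt_12_general (σ δ r K : ℝ) (hσ : 0 < σ) (U : ℝ → ℝ)
    (I : Set ℝ) (hI : I ⊆ Set.Ioi 0)
    (hU : ContDiffOn ℝ 2 U (Set.Ioi 0))
    (hODE : ∀ z ∈ I,
      (1/2)*σ^2*z^2 * deriv (deriv U) z + (1 - δ*z) * deriv U z - (r - δ) * U z = 0) :
    ∀ z ∈ I,
      deriv (fun t : ℝ =>
          (U t - (t - K) * deriv U t) / (t ^ (2*δ/σ^2) * Real.exp (2/(σ^2*t)))) z
        = (1 + (r - δ)*K - r*z) * U z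
            * (2 / (σ^2 * z^2 * (z ^ (2*δ/σ^2) * Real.exp (2/(σ^2*z))))) := by
  intro z hz
  have hz0 : 0 < z := hI hz
  obtain ⟨hdU, hddU⟩ := hU.hasDerivAt_deriv_of_two isOpen_Ioi hz0
  have hS := hasDerivAt_rpow_mul_exp_div hz0.ne' (2 * δ / σ ^ 2) (2 / σ ^ 2)
  simp only [div_div] at hS
  have hSpos : 0 < z ^ (2 * δ / σ ^ 2) * exp (2 / (σ ^ 2 * z)) :=
    mul_pos (rpow_pos_of_pos hz0 _) (exp_pos _)
  refine ((hdU.sub_sub_const_mul K hddU).div hS hSpos.ne').deriv.trans ?_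
  have hσ2 : σ ^ 2 ≠ 0 := pow_ne_zero 2 hσ.ne'
  have hU'' : deriv (deriv U) z
      = 2 / (σ ^ 2 * z ^ 2) * ((r - δ) * U z - (1 - δ * z) * deriv U z) := by
    field_simp
    linarith [hODE z hz]
  rw [hU'']
  field_simp
  ring

/-- Canonical form identity for the exchange option:
`((U − (z−K)U')/S')' = (1 + ρK − rz) U m'` where `ρ = r − δ`. -/
theorem stmt_12 (σ δ r K : ℝ) (hσ : 0 < σ) (hK : 0 < K) (U : ℝ → ℝ)
    (I : Set ℝ) (hI : I ⊆ Set.Ioi 0) (hIopen : IsOpen I)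
    (hU : ContDiffOn ℝ 2 U (Set.Ioi 0))
    (hODE : ∀ z ∈ I,
      (1/2)*σ^2*z^2 * deriv (deriv U) z + (1 - δ*z) * deriv U z - (r - δ) * U z = 0) :
    ∀ z ∈ I,
      deriv (fun t : ℝ =>
          (U t - (t - K) * deriv U t) / (t ^ (2*δ/σ^2) * Real.exp (2/(σ^2*t)))) z
        = (1 + (r - δ)*K - r*z) * U z
            * (2 / (σ^2 * z^2 * (z ^ (2*δ/σ^2) * Real.exp (2/(σ^2*z))))) :=
  stmt_12_general σ δ r K hσ U I hI hU hODE
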